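/- arXiv:1408.5028 — 5 statements merged into one kernel-verified Lean document; each statement's English description precedes it below -/
import Mathlib

section
/- If [Γ]t and [Δ]u are two planar lambda terms decorating the same lambda skeleton p, then [Γ]t and [Δ]u are α-equivalent (one is obtained from the other by renaming of variables). -/
/-- Lambda skeletons `Λ̃(i)`, graded by degree. -/
inductive Skel : ℕ → Type
  | leaf : Skel 1
  | app : {j k : ℕ} → Skel j → Skel k → Skel (j + k)
  | lam : {i : ℕ} → Skel (i + 1) → Skel i

/-- Raw (pseudo) lambda terms with named variables. -/
inductive Term : Type
  | var : ℕ → Term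
  | app : Term → Term → Term
  | lam : ℕ → Term → Term
  deriving DecidableEq

/-- `Planar Γ t p`: `t` is a planar lambda term with free variables `Γ`
decorating the skeleton `p` (derivable without the exchange rule). -/
inductive Planar : {i : ℕ} → List ℕ → Term → Skel i → Prop
  | var (x : ℕ) : Planar [x] (Term.var x) Skel.leaf
  | app {j k : ℕ} {Γ Δ : List ℕ} {t u : Term} {p : Skel j} {q : Skel k} :
      Planar Γ t p → Planar Δ u q → Planar (Γ ++ Δ) (Term.app t u) (Skel.app p q)
  | lam {i x : ℕ} {Γ : List ℕ} {t : Term} {p : Skel (i + 1)} :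
      Planar (x :: Γ) t p → Planar Γ (Term.lam x t) (Skel.lam p)

/-- α-equivalence of linear lambda terms-in-context: `[Γ]t` and `[Δ]u` are
α-equivalent when one is obtained from the other by a (positional) renaming of
the context variables and of the variables introduced by lambda abstraction. -/
inductive Aeq : List ℕ → Term → List ℕ → Term → Prop
  | var (x y : ℕ) : Aeq [x] (Term.var x) [y] (Term.var y)
  | app {Γ₁ Γ₂ Δ₁ Δ₂ : List ℕ} {t₁ t₂ u₁ u₂ : Term} :
      Aeq Γ₁ t₁ Δ₁ u₁ → Aeq Γ₂ t₂ Δ₂ u₂ →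
      Aeq (Γ₁ ++ Γ₂) (Term.app t₁ t₂) (Δ₁ ++ Δ₂) (Term.app u₁ u₂)
  | lam {x y : ℕ} {Γ Δ : List ℕ} {t u : Term} :
      Aeq (x :: Γ) t (y :: Δ) u → Aeq Γ (Term.lam x t) Δ (Term.lam y u)


/-- Unindexed skeletons, used to avoid dependent elimination issues. -/
inductive Skel' : Type
  | leaf : Skel'
  | app : Skel' → Skel' → Skel'
  | lam : Skel' → Skel'

/-- Erasure of the degree index. -/
def Skel.erase : {i : ℕ} → Skel i → Skel'
  | _, Skel.leaf => Skel'.leaf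
  | _, Skel.app p q => Skel'.app p.erase q.erase
  | _, Skel.lam p => Skel'.lam p.erase

theorem planar_aux : ∀ {i : ℕ} {p : Skel i} {Γ : List ℕ} {t : Term},
    Planar Γ t p → ∀ {i' : ℕ} {p' : Skel i'} {Δ : List ℕ} {u : Term},
    Planar Δ u p' → p.erase = p'.erase → Aeq Γ t Δ u := by
  intro i p Γ t h₁
  induction h₁ with
  | var x =>
    intro i' p' Δ u h₂ he
    cases h₂ <;> simp [Skel.erase] at he
    exact Aeq.var _ _
  | app ha hb iha ihb =>
    intro i' p' Δ u h₂ he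
    cases h₂ with
    | var => simp [Skel.erase] at he
    | lam => simp [Skel.erase] at he
    | app ha' hb' =>
      simp [Skel.erase] at he
      exact Aeq.app (iha ha' he.1) (ihb hb' he.2)
  | lam ha ih =>
    intro i' p' Δ u h₂ he
    cases h₂ with
    | var => simp [Skel.erase] at he
    | app => simp [Skel.erase] at he
    | lam ha' =>
      simp [Skel.erase] at he
      exact Aeq.lam (ih ha' he)

/-- Proposition 2.5: two planar lambda terms decorating the same lambda
skeleton are α-equivalent. -/
theorem planar_decorations_alpha_equivalent {i : ℕ} {p : Skel i}
    (Γ Δ : List ℕ) (t u : Term)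
    (h₁ : Planar Γ t p) (h₂ : Planar Δ u p) :
    Aeq Γ t Δ u := planar_aux h₁ h₂ rfl
end

section
/- The bivariate generating functions B(z,x) = Σ_{n,i} b_{n,i} zⁿ xⁱ and R(z,x) = Σ_{n,i} r_{n,i} zⁿ xⁱ, where b_{n,i} (resp. r_{n,i}) is the number of B-colorings (resp. R-colorings) of size n of lambda skeletons of degree i, satisfy the identity x·R(z,x) = z·x·B(z,x) + R(z,x) − R₀(z) as formal power series in z and x, where R₀(z) = Σ_n r_{n,0} zⁿ is the part of R(z,x) of degree 0 in x. -/
/-- The two colors: `B` ("blue", neutral) and `R` ("red", normal). -/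
inductive Color : Type
  | B : Color
  | R : Color
  deriving DecidableEq

/-- `Col c i p`: colorings (derivations of neutrality for `c = B`,
respectively normality for `c = R`) of the skeleton `p` of degree `i`,
by the rules (v), (a), (s), (ℓ). -/
inductive Col : Color → (i : ℕ) → Skel i → Type
  | v : Col Color.B 1 Skel.leaf
  | a {j k : ℕ} {p : Skel j} {q : Skel k} :
      Col Color.B j p → Col Color.R k q → Col Color.B (j + k) (Skel.app p q)
  | s {i : ℕ} {p : Skel i} : Col Color.B i p → Col Color.R i p
  | l {i : ℕ} {p : Skel (i + 1)} : Col Color.R (i + 1) p → Col Color.R i (Skel.lam p)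

/-- The size of a coloring: the number of uses of the s-rule in it. -/
def Col.size : {c : Color} → {i : ℕ} → {p : Skel i} → Col c i p → ℕ
  | _, _, _, Col.v => 0
  | _, _, _, Col.a d e => d.size + e.size
  | _, _, _, Col.s d => d.size + 1
  | _, _, _, Col.l d => d.size

/-- The number of colorings of color `c` and size `n` of lambda skeletons
of degree `i`. -/
noncomputable def colCount (c : Color) (n i : ℕ) : ℕ :=
  Nat.card { pp : (p : Skel i) × Col c i p // Col.size pp.2 = n }

/-- The bivariate generating function `B(z,x)` counting B-colorings by size
(exponent of `z`, variable `0`) and degree (exponent of `x`, variable `1`). -/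
noncomputable def Bgf : MvPowerSeries (Fin 2) ℚ :=
  fun d => (colCount Color.B (d 0) (d 1) : ℚ)

/-- The bivariate generating function `R(z,x)` counting R-colorings by size
(exponent of `z`, variable `0`) and degree (exponent of `x`, variable `1`). -/
noncomputable def Rgf : MvPowerSeries (Fin 2) ℚ :=
  fun d => (colCount Color.R (d 0) (d 1) : ℚ)


/-- The part `R₀(z)` of `R(z,x)` of degree 0 in `x`. -/
noncomputable def R0gf : MvPowerSeries (Fin 2) ℚ :=
  fun d => if d 1 = 0 then (colCount Color.R (d 0) 0 : ℚ) else 0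

/-!
An R-coloring ends either with the s-rule, applied to a B-coloring of the same skeleton and of
size one less, or with the ℓ-rule, applied to an R-coloring of the same size and of degree one
more. Hence `r_{n,i} = b_{n-1,i} + r_{n,i+1}` (with `b_{-1,i} = 0`), which is the coefficient of
`zⁿ x^{i+1}` in the identity; the coefficients of `x⁰` vanish on both sides.

Counting needs the colorings of given size and degree to form a finite set: a coloring is
determined by its tree of rule names, and this tree has at most `4n + 2` nodes.
-/

abbrev Colorings (c : Color) (n i : ℕ) : Type :=
  { pp : (p : Skel i) × Col c i p // pp.2.size = n }

inductive RuleTree : Type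
  | v : RuleTree
  | a : RuleTree → RuleTree → RuleTree
  | s : RuleTree → RuleTree
  | l : RuleTree → RuleTree

namespace RuleTree

def nodes : RuleTree → ℕ
  | v => 1
  | a x y => x.nodes + y.nodes + 1
  | s x => x.nodes + 1
  | l x => x.nodes + 1

theorem finite_setOf_nodes_le : ∀ N : ℕ, {t : RuleTree | t.nodes ≤ N}.Finite
  | 0 => Set.finite_empty.subset fun t ht => by
      cases t <;> simp only [Set.mem_ofPred_eq, nodes] at ht <;> omega
  | N + 1 => by
    have hN := finite_setOf_nodes_le N
    refine (((hN.image2 a hN).union ((hN.image s).union (hN.image l))).insert v).subset ?_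
    rintro (_ | ⟨x, y⟩ | x | x) ht <;> simp only [Set.mem_ofPred_eq, nodes] at ht
    · exact Set.mem_insert _ _
    · exact Or.inr (Or.inl (Set.mem_image2_of_mem (by simp; omega) (by simp; omega)))
    · exact Or.inr (Or.inr (Or.inl (Set.mem_image_of_mem _ (by simp; omega))))
    · exact Or.inr (Or.inr (Or.inr (Set.mem_image_of_mem _ (by simp; omega))))

end RuleTree

namespace Col

def rules : {c : Color} → {i : ℕ} → {p : Skel i} → Col c i p → RuleTree
  | _, _, _, v => .v
  | _, _, _, a d e => .a d.rules e.rules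
  | _, _, _, s d => .s d.rules
  | _, _, _, l d => .l d.rules

theorem eq_of_rules_eq {c : Color} {i : ℕ} {p : Skel i} (d : Col c i p) :
    ∀ {i' : ℕ} {p' : Skel i'} (e : Col c i' p'), d.rules = e.rules →
      (⟨i, p, d⟩ : (i : ℕ) × (p : Skel i) × Col c i p) = ⟨i', p', e⟩ := by
  induction d with
  | v => rintro _ _ (_ | _) h <;> first | rfl | cases h
  | a d₁ d₂ ih₁ ih₂ =>
    rintro _ _ (_ | ⟨e₁, e₂⟩) h <;> simp only [rules, reduceCtorEq, RuleTree.a.injEq] at h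
    cases ih₁ e₁ h.1
    cases ih₂ e₂ h.2
    rfl
  | s d ih =>
    intro _ _ e h
    cases e with
    | s e => cases ih e (RuleTree.s.inj h); rfl
    | l e => cases h
  | l d ih =>
    intro _ _ e h
    cases e with
    | s e => cases h
    | l e => cases ih e (RuleTree.l.inj h); rfl

/- The potential `4 * size + 2 - nodes - degree` is at least `3` on R-colorings, which pays
for the `a`-node joining one to a B-coloring. -/
theorem nodes_rules_add_le {c : Color} {i : ℕ} {p : Skel i} (d : Col c i p) :
    d.rules.nodes + i + (if c = Color.B then 0 else 3) ≤ 4 * d.size + 2 := by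
  induction d with
  | v => simp [rules, RuleTree.nodes, size]
  | a _ _ ih₁ ih₂ =>
    simp only [rules, RuleTree.nodes, size, ↓reduceIte, reduceCtorEq] at ih₁ ih₂ ⊢
    omega
  | s _ ih =>
    simp only [rules, RuleTree.nodes, size, ↓reduceIte, reduceCtorEq] at ih ⊢
    omega
  | l _ ih =>
    simp only [rules, RuleTree.nodes, size, ↓reduceIte, reduceCtorEq] at ih ⊢
    omega

end Col

instance (c : Color) (n i : ℕ) : Finite (Colorings c n i) := by
  have hfin := (RuleTree.finite_setOf_nodes_le (4 * n + 2)).to_subtype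
  refine Finite.of_injective (β := {t : RuleTree | t.nodes ≤ 4 * n + 2})
    (fun pp => ⟨pp.1.2.rules, ?_⟩) ?_
  · have := pp.1.2.nodes_rules_add_le
    rw [pp.2] at this
    exact le_of_add_le_left (le_of_add_le_left this)
  · rintro ⟨⟨p, d⟩, rfl⟩ ⟨⟨q, e⟩, _⟩ h
    cases Col.eq_of_rules_eq d e (congrArg Subtype.val h)
    rfl

def coloringsREquiv (n i : ℕ) :
    Colorings Color.R n i ≃
      { pp : (p : Skel i) × Col Color.B i p // pp.2.size + 1 = n } ⊕
        Colorings Color.R n (i + 1) where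
  toFun
    | ⟨⟨p, Col.s d⟩, h⟩ => Sum.inl ⟨⟨p, d⟩, h⟩
    | ⟨⟨_, Col.l d⟩, h⟩ => Sum.inr ⟨⟨_, d⟩, h⟩
  invFun
    | Sum.inl ⟨⟨p, d⟩, h⟩ => ⟨⟨p, Col.s d⟩, h⟩
    | Sum.inr ⟨⟨q, d⟩, h⟩ => ⟨⟨Skel.lam q, Col.l d⟩, h⟩
  left_inv := by rintro ⟨⟨p, d | d⟩, h⟩ <;> rfl
  right_inv := by rintro (⟨⟨p, d⟩, h⟩ | ⟨⟨q, d⟩, h⟩) <;> rfl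

theorem colCount_R (n i : ℕ) :
    colCount Color.R n i =
      (if n = 0 then 0 else colCount Color.B (n - 1) i) + colCount Color.R n (i + 1) := by
  have hB : Nat.card { pp : (p : Skel i) × Col Color.B i p // pp.2.size + 1 = n } =
      if n = 0 then 0 else colCount Color.B (n - 1) i := by
    split_ifs with hn
    · have : IsEmpty { pp : (p : Skel i) × Col Color.B i p // pp.2.size + 1 = n } :=
        ⟨fun pp => by omega⟩
      exact Nat.card_of_isEmpty
    · exact Nat.card_congr (Equiv.subtypeEquivRight fun _ => by omega)
  have : Finite { pp : (p : Skel i) × Col Color.B i p // pp.2.size + 1 = n } :=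
    Finite.of_injective (β := Colorings Color.B (n - 1) i) (fun pp => ⟨pp.1, by omega⟩)
      fun _ _ h => Subtype.ext (congrArg Subtype.val h :)
  rw [colCount, Nat.card_congr (coloringsREquiv n i), Nat.card_sum, hB]
  rfl

theorem MvPowerSeries.coeff_X_mul {σ R : Type*} [CommSemiring R] [DecidableEq σ] (s : σ)
    (φ : MvPowerSeries σ R) (d : σ →₀ ℕ) :
    MvPowerSeries.coeff d (MvPowerSeries.X s * φ) =
      if d s = 0 then 0 else MvPowerSeries.coeff (d - Finsupp.single s 1) φ := by
  rw [MvPowerSeries.X_def, MvPowerSeries.coeff_monomial_mul, one_mul]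
  simp only [Finsupp.single_le_iff]
  split_ifs <;> first | rfl | omega

/-- Equation (2): `x·R(z,x) = z·x·B(z,x) + R(z,x) − R₀(z)` as formal power
series. -/
theorem Rgf_functional_equation :
    MvPowerSeries.X 1 * Rgf =
      MvPowerSeries.X 0 * MvPowerSeries.X 1 * Bgf + Rgf - R0gf := by
  ext d
  rw [map_sub, map_add, mul_assoc, MvPowerSeries.coeff_X_mul, MvPowerSeries.coeff_X_mul,
    MvPowerSeries.coeff_X_mul]
  simp only [Rgf, Bgf, R0gf, MvPowerSeries.coeff_apply, Finsupp.coe_tsub, Pi.sub_apply,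
    Finsupp.single_apply]
  cases d 1 with
  | zero => simp
  | succ k =>
    simp [colCount_R (d 0) k, apply_ite (Nat.cast : ℕ → ℚ)]
end

section
/- For every n ≥ 1, the number of R-colorings of size n of lambda skeletons of degree 0 equals the sum over all i ∈ ℕ of the number of B-colorings of size n−1 of lambda skeletons of degree i (in generating functions, R(z,0) = z·B(z,1); bijectively, any closed normal lambda term consists of i leading lambda abstractions applied to a neutral term with i free variables). -/
/-! ### Auxiliary: untyped derivation trees, used to prove finiteness -/

/-- Untyped derivation trees. -/
inductive PreCol : Type
  | v : PreCol
  | a : PreCol → PreCol → PreCol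
  | s : PreCol → PreCol
  | l : PreCol → PreCol

/-- Number of nodes of an untyped derivation tree. -/
def PreCol.nodes : PreCol → ℕ
  | .v => 1
  | .a d e => d.nodes + e.nodes + 1
  | .s d => d.nodes + 1
  | .l d => d.nodes + 1

lemma PreCol.nodes_pos (t : PreCol) : 1 ≤ t.nodes := by
  cases t <;> simp [PreCol.nodes]

lemma PreCol.finite_nodes_le (N : ℕ) : {t : PreCol | t.nodes ≤ N}.Finite := by
  induction N with
  | zero =>
    have : {t : PreCol | t.nodes ≤ 0} = ∅ := by
      ext t; simp only [Set.mem_setOf_eq, Set.mem_empty_iff_false, iff_false]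
      have := t.nodes_pos; omega
    rw [this]; exact Set.finite_empty
  | succ N ih =>
    apply Set.Finite.subset (Set.Finite.union
      (Set.Finite.union
        (Set.Finite.union (Set.finite_singleton PreCol.v)
          (Set.Finite.image (fun x : PreCol × PreCol => PreCol.a x.1 x.2) (ih.prod ih)))
        (Set.Finite.image PreCol.s ih))
      (Set.Finite.image PreCol.l ih))
    rintro t ht
    cases t with
    | v => exact Or.inl (Or.inl (Or.inl rfl))
    | a d e =>
      refine Or.inl (Or.inl (Or.inr ⟨(d, e), ⟨?_, ?_⟩, rfl⟩)) <;>
        · simp only [Set.mem_setOf_eq, PreCol.nodes] at ht ⊢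
          have := d.nodes_pos; have := e.nodes_pos; omega
    | s d =>
      refine Or.inl (Or.inr ⟨d, ?_, rfl⟩)
      simp only [Set.mem_setOf_eq, PreCol.nodes] at ht ⊢; omega
    | l d =>
      refine Or.inr ⟨d, ?_, rfl⟩
      simp only [Set.mem_setOf_eq, PreCol.nodes] at ht ⊢; omega

/-- Forgetting types and indices of a coloring. -/
def Col.toPre : {c : Color} → {i : ℕ} → {p : Skel i} → Col c i p → PreCol
  | _, _, _, Col.v => .v
  | _, _, _, Col.a d e => .a d.toPre e.toPre
  | _, _, _, Col.s d => .s d.toPre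
  | _, _, _, Col.l d => .l d.toPre

lemma Col.toPre_inj : ∀ {c : Color} {i : ℕ} {p : Skel i} (d : Col c i p)
    {c' : Color} {i' : ℕ} {p' : Skel i'} (d' : Col c' i' p'),
    d.toPre = d'.toPre → c = c' ∧ i = i' ∧ HEq p p' ∧ HEq d d' := by
  intro c i p d
  induction d with
  | v => intro c' i' p' d' h; cases d' <;> simp_all [Col.toPre]
  | a d e ihd ihe =>
    intro c' i' p' d' h
    cases d' <;> simp only [Col.toPre, PreCol.a.injEq, reduceCtorEq] at h
    · obtain ⟨h1, h2⟩ := h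
      obtain ⟨-, rfl, hp, hd⟩ := ihd _ h1
      obtain ⟨-, rfl, hq, he⟩ := ihe _ h2
      cases hp; cases hq; cases hd; cases he
      exact ⟨rfl, rfl, HEq.rfl, HEq.rfl⟩
  | s d ihd =>
    intro c' i' p' d' h
    cases d' <;> simp only [Col.toPre, PreCol.s.injEq, reduceCtorEq] at h
    · obtain ⟨-, rfl, hp, hd⟩ := ihd _ h
      cases hp; cases hd
      exact ⟨rfl, rfl, HEq.rfl, HEq.rfl⟩
  | l d ihd =>
    intro c' i' p' d' h
    cases d' <;> simp only [Col.toPre, PreCol.l.injEq, reduceCtorEq] at h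
    · obtain ⟨-, hi, hp, hd⟩ := ihd _ h
      cases (Nat.succ_injective hi); cases hp; cases hd
      exact ⟨rfl, rfl, HEq.rfl, HEq.rfl⟩

/-- Bonus used in the degree/node bounds. -/
def Color.bonusDeg : Color → ℕ
  | .B => 1
  | .R => 0

def Color.bonusNodes : Color → ℕ
  | .B => 0
  | .R => 3

/-- The degree of a coloring is bounded by its size (plus one for `B`). -/
lemma Col.deg_le {c : Color} {i : ℕ} {p : Skel i} (d : Col c i p) :
    i ≤ d.size + c.bonusDeg := by
  induction d with
  | v => simp [Col.size, Color.bonusDeg]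
  | a d e ihd ihe => simp only [Col.size, Color.bonusDeg] at *; omega
  | s d ihd => simp only [Col.size, Color.bonusDeg] at *; omega
  | l d ihd => simp only [Col.size, Color.bonusDeg] at *; omega

/-- The number of nodes of a coloring is bounded in terms of its size. -/
lemma Col.nodes_le {c : Color} {i : ℕ} {p : Skel i} (d : Col c i p) :
    d.toPre.nodes + i + c.bonusNodes ≤ 4 * d.size + 2 := by
  induction d with
  | v => simp [Col.size, Color.bonusNodes, Col.toPre, PreCol.nodes]
  | a d e ihd ihe =>
    simp only [Col.size, Color.bonusNodes, Col.toPre, PreCol.nodes] at *; omega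
  | s d ihd =>
    simp only [Col.size, Color.bonusNodes, Col.toPre, PreCol.nodes] at *; omega
  | l d ihd =>
    simp only [Col.size, Color.bonusNodes, Col.toPre, PreCol.nodes] at *; omega

/-- There are only finitely many colorings of a given size and degree. -/
instance colFinite (c : Color) (n i : ℕ) :
    Finite { pp : (p : Skel i) × Col c i p // Col.size pp.2 = n } := by
  have hfin : Finite {t : PreCol // t.nodes ≤ 4 * n + 2} :=
    (PreCol.finite_nodes_le (4 * n + 2)).to_subtype
  apply Finite.of_injective
    (f := fun pp => (⟨pp.1.2.toPre, by
      have h := pp.1.2.nodes_le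
      have := pp.2
      cases c <;> simp_all [Color.bonusNodes] <;> omega⟩ :
      {t : PreCol // t.nodes ≤ 4 * n + 2}))
  rintro ⟨⟨p, d⟩, hd⟩ ⟨⟨p', d'⟩, hd'⟩ h
  simp only [Subtype.mk.injEq] at h
  obtain ⟨-, -, hp, hcol⟩ := Col.toPre_inj d d' h
  cases hp; cases hcol
  rfl

/-! ### The bijection -/

/-- Wrap a skeleton of degree `i` in `i` lambda abstractions. -/
def skel0 : (i : ℕ) → Skel i → Skel 0
  | 0, p => p
  | i + 1, p => skel0 i (Skel.lam p)

/-- Wrap an R-coloring of degree `i` in `i` uses of the ℓ-rule. -/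
def col0 : (i : ℕ) → (p : Skel i) → Col Color.R i p → Col Color.R 0 (skel0 i p)
  | 0, _, d => d
  | i + 1, p, d => col0 i (Skel.lam p) (Col.l d)

lemma col0_size : ∀ (i : ℕ) (p : Skel i) (d : Col Color.R i p),
    (col0 i p d).size = d.size
  | 0, _, _ => rfl
  | i + 1, p, d => col0_size i (Skel.lam p) (Col.l d)

/-- Strip the leading ℓ-rules and the topmost s-rule off an R-coloring. -/
def unroll : {i : ℕ} → {p : Skel i} → Col Color.R i p →
    (j : ℕ) × (q : Skel j) × Col Color.B j q
  | _, _, Col.s d => ⟨_, _, d⟩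
  | _, _, Col.l d => unroll d

lemma unroll_s {i : ℕ} {p : Skel i} (d : Col Color.B i p) :
    unroll (Col.s d) = ⟨i, p, d⟩ := by simp [unroll]

lemma unroll_l {i : ℕ} {p : Skel (i + 1)} (d : Col Color.R (i + 1) p) :
    unroll (Col.l d) = unroll d := by simp [unroll]

lemma unroll_size : ∀ {i : ℕ} {p : Skel i} (d : Col Color.R i p),
    (unroll d).2.2.size + 1 = d.size
  | _, _, Col.s d => by rw [unroll_s]; simp [Col.size]
  | _, _, Col.l d => by rw [unroll_l]; rw [unroll_size d]; simp [Col.size]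

lemma unroll_roundtrip : ∀ {i : ℕ} {p : Skel i} (d : Col Color.R i p),
    (⟨skel0 i p, col0 i p d⟩ : (p : Skel 0) × Col Color.R 0 p) =
      ⟨skel0 (unroll d).1 (unroll d).2.1,
        col0 (unroll d).1 (unroll d).2.1 (Col.s (unroll d).2.2)⟩
  | _, _, Col.s d => by rw [unroll_s]
  | _, _, Col.l d => by rw [unroll_l]; exact unroll_roundtrip d

lemma col0_unroll : ∀ (i : ℕ) (p : Skel i) (d : Col Color.R i p),
    unroll (col0 i p d) = unroll d
  | 0, _, _ => rfl
  | i + 1, p, d => col0_unroll i (Skel.lam p) (Col.l d)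

/-- For every `n ≥ 1`, the number of R-colorings of size `n` of skeletons of
degree 0 equals the sum over all `i` of the number of B-colorings of size
`n − 1` of skeletons of degree `i` (a B-coloring of size `n − 1` has degree at
most `n`, so the sum over `i ∈ {0, …, n}` accounts for all of them); in
generating functions, `R(z,0) = z·B(z,1)`. -/
theorem closed_normal_eq_sum_neutral (n : ℕ) (hn : 1 ≤ n) :
    colCount Color.R n 0 =
      ∑ i ∈ Finset.range (n + 1), colCount Color.B (n - 1) i := by
  classical
  set F : Fin (n + 1) → Type :=
    fun i => { pp : (p : Skel (i : ℕ)) × Col Color.B (i : ℕ) p // Col.size pp.2 = n - 1 }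
    with hF
  -- the forward map
  have degOK : ∀ (pp : { pp : (p : Skel 0) × Col Color.R 0 p // Col.size pp.2 = n }),
      (unroll pp.1.2).1 < n + 1 := by
    rintro ⟨⟨p, d⟩, hd⟩
    have hd' : d.size = n := hd
    have h1 := unroll_size d
    have h2 := (unroll d).2.2.deg_le
    simp only [Color.bonusDeg] at h2
    simp only
    omega
  let f : { pp : (p : Skel 0) × Col Color.R 0 p // Col.size pp.2 = n } → (i : Fin (n + 1)) × F i :=
    fun pp => ⟨⟨(unroll pp.1.2).1, degOK pp⟩,
      ⟨⟨(unroll pp.1.2).2.1, (unroll pp.1.2).2.2⟩, by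
        have h1 := unroll_size pp.1.2
        have h2 : pp.1.2.size = n := pp.2
        show (unroll pp.1.2).2.2.size = n - 1
        omega⟩⟩
  let g : ((i : Fin (n + 1)) × F i) → { pp : (p : Skel 0) × Col Color.R 0 p // Col.size pp.2 = n } :=
    fun x => ⟨⟨skel0 x.1 x.2.1.1, col0 x.1 x.2.1.1 (Col.s x.2.1.2)⟩, by
      have h1 := col0_size x.1 x.2.1.1 (Col.s x.2.1.2)
      have h2 : (x.2.1.2).size = n - 1 := x.2.2
      have h3 : (Col.s x.2.1.2).size = x.2.1.2.size + 1 := rfl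
      show (col0 x.1 x.2.1.1 (Col.s x.2.1.2)).size = n
      omega⟩
  have hgf : ∀ pp, g (f pp) = pp := by
    rintro ⟨⟨p, d⟩, hd⟩
    apply Subtype.ext
    have := unroll_roundtrip d
    simp only [f, g]
    exact this.symm
  have hfg : ∀ x, f (g x) = x := by
    rintro ⟨⟨i, hi⟩, ⟨⟨p, b⟩, hb⟩⟩
    have key : unroll (col0 i p (Col.s b)) = ⟨i, p, b⟩ := by
      rw [col0_unroll i p (Col.s b), unroll_s]
    simp only [f, g]
    have gen : ∀ (x : (j : ℕ) × (q : Skel j) × Col Color.B j q) (h : x = ⟨i, p, b⟩)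
        (h1 : x.1 < n + 1) (h2 : Col.size x.2.2 = n - 1),
        (⟨⟨x.1, h1⟩, ⟨⟨x.2.1, x.2.2⟩, h2⟩⟩ : (i : Fin (n + 1)) × F i) = ⟨⟨i, hi⟩, ⟨⟨p, b⟩, hb⟩⟩ := by
      rintro x rfl h1 h2; rfl
    exact gen _ key _ _
  have hequiv : { pp : (p : Skel 0) × Col Color.R 0 p // Col.size pp.2 = n } ≃
      (i : Fin (n + 1)) × F i := ⟨f, g, hgf, hfg⟩
  have : colCount Color.R n 0 = Nat.card ((i : Fin (n + 1)) × F i) := by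
    rw [colCount]; exact Nat.card_congr hequiv
  rw [this]
  letI : ∀ i : Fin (n + 1), Fintype (F i) := fun i => Fintype.ofFinite _
  rw [Nat.card_eq_fintype_card, Fintype.card_sigma]
  rw [← Fin.sum_univ_eq_sum_range (fun i => colCount Color.B (n - 1) i) (n + 1)]
  refine Finset.sum_congr rfl fun i _ => ?_
  rw [colCount, Nat.card_eq_fintype_card]
end

section
/- If [x]t is a value-open normal linear lambda term (a normal linear term with one free variable x containing a subterm of the form u(x)), then t begins with a lambda abstraction: there exists a normal linear term [y,x]t' with two free variables such that t = λy.t'. -/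
/-- `Linear Γ t p`: `t` is a linear lambda term with free variables `Γ`
decorating the skeleton `p` (with the exchange rule). -/
inductive Linear : {i : ℕ} → List ℕ → Term → Skel i → Prop
  | var (x : ℕ) : Linear [x] (Term.var x) Skel.leaf
  | app {j k : ℕ} {Γ Δ : List ℕ} {t u : Term} {p : Skel j} {q : Skel k} :
      Linear Γ t p → Linear Δ u q → Linear (Γ ++ Δ) (Term.app t u) (Skel.app p q)
  | lam {i x : ℕ} {Γ : List ℕ} {t : Term} {p : Skel (i + 1)} :
      Linear (x :: Γ) t p → Linear Γ (Term.lam x t) (Skel.lam p)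
  | exch {i : ℕ} {Γ Δ : List ℕ} {x y : ℕ} {t : Term} {p : Skel i} :
      Linear (Γ ++ y :: x :: Δ) t p → Linear (Γ ++ x :: y :: Δ) t p

/-- The subterm relation on raw lambda terms. -/
inductive Subterm : Term → Term → Prop
  | refl (t : Term) : Subterm t t
  | appL {s t u : Term} : Subterm s t → Subterm s (Term.app t u)
  | appR {s t u : Term} : Subterm s u → Subterm s (Term.app t u)
  | lam {s t : Term} {x : ℕ} : Subterm s t → Subterm s (Term.lam x t)

/-- A term contains a β-redex iff it has a subterm of the form `(λx.b)(u)`. -/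
def HasRedex (t : Term) : Prop :=
  ∃ (x : ℕ) (b u : Term), Subterm (Term.app (Term.lam x b) u) t

/-- All lambda-binder names occurring in a term. -/
def tBinders : Term → List ℕ
  | Term.var _ => []
  | Term.app t u => tBinders t ++ tBinders u
  | Term.lam x t => x :: tBinders t

/-- All variable names (occurrences and binders) occurring in a term. -/
def allVars : Term → List ℕ
  | Term.var x => [x]
  | Term.app t u => allVars t ++ allVars u
  | Term.lam x t => x :: allVars t

/-- `[x]t` is the identity term. -/
def IsIdA (x : ℕ) (t : Term) : Prop := t = Term.var x

/-- `[x]t` is function-open: up to α-equivalence (choosing a representative in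
which the free variable is not shadowed by any binder), the free variable is
applied to some argument, i.e. `y(u)` is a subterm. -/
def FunctionOpenA (x : ℕ) (t : Term) : Prop :=
  ∃ (y : ℕ) (t' : Term), Aeq [x] t [y] t' ∧ y ∉ tBinders t' ∧
    ∃ u : Term, Subterm (Term.app (Term.var y) u) t'

/-- `[x]t` is value-open: up to α-equivalence (choosing a representative in
which the free variable is not shadowed by any binder), the free variable
occurs as the argument of an application, i.e. `u(y)` is a subterm. -/
def ValueOpenA (x : ℕ) (t : Term) : Prop :=
  ∃ (y : ℕ) (t' : Term), Aeq [x] t [y] t' ∧ y ∉ tBinders t' ∧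
    ∃ u : Term, Subterm (Term.app u (Term.var y)) t'


/-- Positional context extraction: the list of free-variable occurrences
in left-to-right order; `none` if some binder does not match. -/
def ctx : Term → Option (List ℕ)
  | Term.var x => some [x]
  | Term.app t u =>
      match ctx t, ctx u with
      | some a, some b => some (a ++ b)
      | _, _ => none
  | Term.lam x t =>
      match ctx t with
      | some (y :: Γ) => if y = x then some Γ else none
      | _ => none

lemma ctx_app_inv {t u : Term} {Γ : List ℕ} (h : ctx (Term.app t u) = some Γ) :
    ∃ a b, ctx t = some a ∧ ctx u = some b ∧ Γ = a ++ b := by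
  cases ht : ctx t with
  | none => simp [ctx, ht] at h
  | some a =>
    cases hu : ctx u with
    | none => simp [ctx, ht, hu] at h
    | some b =>
      simp [ctx, ht, hu] at h
      exact ⟨a, b, rfl, rfl, h.symm⟩

lemma ctx_lam_inv {x : ℕ} {t : Term} {Γ : List ℕ}
    (h : ctx (Term.lam x t) = some Γ) : ctx t = some (x :: Γ) := by
  cases ht : ctx t with
  | none => simp [ctx, ht] at h
  | some a =>
    cases a with
    | nil => simp [ctx, ht] at h
    | cons y Γ' =>
      by_cases hyx : y = x
      · subst hyx; simp [ctx, ht] at h; subst h; rfl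
      · simp [ctx, ht, hyx] at h

lemma aeq_ctx {Γ Δ : List ℕ} {t u : Term} (h : Aeq Γ t Δ u) :
    ctx t = some Γ ∧ ctx u = some Δ := by
  induction h with
  | var x y => exact ⟨rfl, rfl⟩
  | app h1 h2 ih1 ih2 => simp [ctx, ih1.1, ih1.2, ih2.1, ih2.2]
  | lam h ih => simp [ctx, ih.1, ih.2]

lemma aeq_app_inv {Γ Δ : List ℕ} {t₁ t₂ u : Term}
    (h : Aeq Γ (Term.app t₁ t₂) Δ u) : ∃ u₁ u₂, u = Term.app u₁ u₂ := by
  cases h with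
  | app h1 h2 => exact ⟨_, _, rfl⟩

lemma aeq_var_inv {Γ Δ : List ℕ} {x : ℕ} {u : Term}
    (h : Aeq Γ (Term.var x) Δ u) : ∃ y, u = Term.var y := by
  cases h with
  | var => exact ⟨_, rfl⟩

lemma no_sub_app_var {s u : Term} {z : ℕ}
    (h : Subterm (Term.app s u) (Term.var z)) : False := by
  cases h

lemma aeq_redex {Γ Δ : List ℕ} {t u : Term} (h : Aeq Γ t Δ u) :
    HasRedex u → HasRedex t := by
  induction h with
  | var x y =>
    rintro ⟨a, b, c, hs⟩
    exact (no_sub_app_var hs).elim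
  | app h1 h2 ih1 ih2 =>
    rintro ⟨a, b, c, hs⟩
    cases hs with
    | refl =>
      cases h1 with
      | lam h1' => exact ⟨_, _, _, Subterm.refl _⟩
    | appL hs' =>
      obtain ⟨a', b', c', hs''⟩ := ih1 ⟨a, b, c, hs'⟩
      exact ⟨a', b', c', Subterm.appL hs''⟩
    | appR hs' =>
      obtain ⟨a', b', c', hs''⟩ := ih2 ⟨a, b, c, hs'⟩
      exact ⟨a', b', c', Subterm.appR hs''⟩
  | lam h ih =>
    rintro ⟨a, b, c, hs⟩
    cases hs with
    | lam hs' =>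
      obtain ⟨a', b', c', hs''⟩ := ih ⟨a, b, c, hs'⟩
      exact ⟨a', b', c', Subterm.lam hs''⟩

lemma mem_ctx_of_sub {y : ℕ} {u s : Term} (h : Subterm (Term.app u (Term.var y)) s) :
    ∀ {Γ : List ℕ}, y ∉ tBinders s → ctx s = some Γ → y ∈ Γ := by
  induction h with
  | refl =>
    intro Γ _ hc
    obtain ⟨a, b, _, hb, rfl⟩ := ctx_app_inv hc
    simp [ctx] at hb
    subst hb
    simp
  | appL h ih =>
    intro Γ hb hc
    obtain ⟨a, b, ha, _, rfl⟩ := ctx_app_inv hc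
    simp only [tBinders, List.mem_append, not_or] at hb
    exact List.mem_append_left _ (ih hb.1 ha)
  | appR h ih =>
    intro Γ hb hc
    obtain ⟨a, b, _, hb', rfl⟩ := ctx_app_inv hc
    simp only [tBinders, List.mem_append, not_or] at hb
    exact List.mem_append_right _ (ih hb.2 hb')
  | lam h ih =>
    intro Γ hb hc
    simp only [tBinders, List.mem_cons, not_or] at hb
    have := ih hb.2 (ctx_lam_inv hc)
    rcases List.mem_cons.mp this with h1 | h1
    · exact absurd h1 hb.1
    · exact h1

lemma head_lemma : ∀ (t₁ : Term) {t₂ : Term} {Γ : List ℕ},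
    ctx (Term.app t₁ t₂) = some Γ → ¬ HasRedex (Term.app t₁ t₂) →
    ∃ z Γ₁ Γ₂, ctx t₁ = some (z :: Γ₁) ∧ ctx t₂ = some Γ₂ ∧ Γ = z :: (Γ₁ ++ Γ₂) := by
  intro t₁
  induction t₁ with
  | var z =>
    intro t₂ Γ hc _
    obtain ⟨a, b, ha, hb, rfl⟩ := ctx_app_inv hc
    simp [ctx] at ha; subst ha
    exact ⟨z, [], b, rfl, hb, by simp⟩
  | app a b iha _ =>
    intro t₂ Γ hc hr
    obtain ⟨g1, g2, h1, h2, rfl⟩ := ctx_app_inv hc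
    have hr1 : ¬ HasRedex (Term.app a b) := by
      rintro ⟨x, b', u, hs⟩
      exact hr ⟨x, b', u, Subterm.appL hs⟩
    obtain ⟨z, Γ₁, Γ₂, hz1, hz2, heq⟩ := iha h1 hr1
    subst heq
    exact ⟨z, Γ₁ ++ Γ₂, g2, h1, h2, by simp⟩
  | lam x b =>
    intro t₂ Γ _ hr
    exact absurd ⟨x, b, t₂, Subterm.refl _⟩ hr

lemma main_lemma : ∀ (t : Term) {t₁ t₂ u : Term} {Γ : List ℕ} {y : ℕ},
    t = Term.app t₁ t₂ → ctx t = some Γ → ¬ HasRedex t → y ∉ tBinders t →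
    List.count y Γ ≤ 1 → Subterm (Term.app u (Term.var y)) t →
    ∃ z Γ', Γ = z :: Γ' ∧ y ≠ z := by
  intro t
  induction t with
  | var z => intro _ _ _ _ _ heq _ _ _ _; exact absurd heq (by simp)
  | lam x b _ => intro _ _ _ _ _ heq _ _ _ _; exact absurd heq (by simp)
  | app a b iha _ =>
    intro t₁ t₂ u Γ y _ hc hr hbnd hcount hsub
    obtain ⟨z, Γ₁, Γ₂, hz1, hz2, rfl⟩ := head_lemma a hc hr
    refine ⟨z, Γ₁ ++ Γ₂, rfl, ?_⟩
    intro hyz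
    subst hyz
    cases hsub with
    | refl =>
      simp [ctx] at hz2
      subst hz2
      simp [List.count_cons, List.count_append] at hcount
    | appL hs =>
      cases a with
      | var w => exact no_sub_app_var hs
      | lam w c => exact hr ⟨w, c, b, Subterm.refl _⟩
      | app a1 a2 =>
        have hra : ¬ HasRedex (Term.app a1 a2) := by
          rintro ⟨x', b', u', hs'⟩
          exact hr ⟨x', b', u', Subterm.appL hs'⟩
        have hbnda : y ∉ tBinders (Term.app a1 a2) := by
          intro hy
          exact hbnd (by simp [tBinders] at hy ⊢; tauto)
        have hcnta : List.count y (y :: Γ₁) ≤ 1 := by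
          simp [List.count_cons, List.count_append] at hcount ⊢
          omega
        obtain ⟨z', Γ'', heq', hne⟩ := iha rfl hz1 hra hbnda hcnta hs
        injection heq' with h1 _
        exact hne h1
    | appR hs =>
      have hbndb : y ∉ tBinders b := by
        intro hy
        exact hbnd (by simp [tBinders] at hy ⊢; tauto)
      have hmem := mem_ctx_of_sub hs hbndb hz2
      have h1 : 1 ≤ List.count y Γ₂ := List.one_le_count_iff.mpr hmem
      simp [List.count_cons, List.count_append] at hcount
      omega

lemma linear_lam_inv {i : ℕ} {Γ : List ℕ} {t : Term} {p : Skel i}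
    (h : Linear Γ t p) :
    ∀ {y : ℕ} {t₀ : Term}, t = Term.lam y t₀ →
      ∃ q : Skel (i + 1), Linear (y :: Γ) t₀ q := by
  induction h with
  | var x => intro y t₀ heq; exact absurd heq (by simp)
  | app h1 h2 ih1 ih2 => intro y t₀ heq; exact absurd heq (by simp)
  | lam h' ih =>
    intro y t₀ heq
    injection heq with h1 h2
    subst h1; subst h2
    exact ⟨_, h'⟩
  | @exch _ Γ' Δ' x' y' _ _ h' ih =>
    intro y t₀ heq
    obtain ⟨q, hq⟩ := ih heq
    exact ⟨q, Linear.exch (Γ := y :: Γ') hq⟩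


/-- Proposition 4.5: a value-open normal linear lambda term `[x]t` must begin
with a lambda abstraction: `t = λy.t'` for some normal linear term `[y,x]t'`
with two free variables. -/
theorem value_open_begins_with_lambda {p : Skel 1} (x : ℕ) (t : Term)
    (h : Linear [x] t p) (hn : ¬ HasRedex t) (hv : ValueOpenA x t) :
    ∃ (y : ℕ) (t' : Term) (p' : Skel 2),
      t = Term.lam y t' ∧ Linear [y, x] t' p' ∧ ¬ HasRedex t' := by
  obtain ⟨y, t', haeq, hbnd, u, hsub⟩ := hv
  cases ht : t with
  | var z =>
    subst ht
    obtain ⟨y', rfl⟩ := aeq_var_inv haeq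
    exact absurd hsub no_sub_app_var
  | app t₁ t₂ =>
    exfalso
    subst ht
    obtain ⟨u₁, u₂, rfl⟩ := aeq_app_inv haeq
    have hct' : ctx (Term.app u₁ u₂) = some [y] := (aeq_ctx haeq).2
    have hnr' : ¬ HasRedex (Term.app u₁ u₂) := fun h' => hn (aeq_redex haeq h')
    obtain ⟨z, Γ', heq, hne⟩ :=
      main_lemma (Term.app u₁ u₂) rfl hct' hnr' hbnd (by simp) hsub
    injection heq with h1 _
    exact hne h1
  | lam z t₀ =>
    obtain ⟨q, hq⟩ := linear_lam_inv h ht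
    subst ht
    refine ⟨z, t₀, q, rfl, hq, ?_⟩
    rintro ⟨a, b, c, hs⟩
    exact hn ⟨a, b, c, Subterm.lam hs⟩
end

section
/- If [x]t is a function-open normal planar lambda term (a normal planar term with one free variable x containing a subterm of the form x(u)), then there exists a unique pair of normal planar terms [x]t₁ and [y]t₂, each with one free variable, such that t is obtained from t₁ by replacing the unique occurrence of its free variable x with x(λy.t₂); in particular the argument of x in t is a closed normal planar term λy.t₂. Moreover the size of t equals the size of t₁ plus the size of t₂. -/
/-- One-hole contexts for lambda terms. -/
inductive Ctx : Type
  | hole : Ctx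
  | appL : Ctx → Term → Ctx
  | appR : Term → Ctx → Ctx
  | lam : ℕ → Ctx → Ctx

/-- Filling the hole of a context with a term. -/
def Ctx.fill : Ctx → Term → Term
  | Ctx.hole, u => u
  | Ctx.appL C t, u => Term.app (C.fill u) t
  | Ctx.appR t C, u => Term.app t (C.fill u)
  | Ctx.lam x C, u => Term.lam x (C.fill u)

/-- The binders on the path from the root to the hole of a context. -/
def Ctx.binders : Ctx → List ℕ
  | Ctx.hole => []
  | Ctx.appL C _ => C.binders
  | Ctx.appR _ C => C.binders
  | Ctx.lam x C => x :: C.binders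


/-- `FunDecomp x t π y t₁ t₂ C` expresses that the function-open normal planar
term `[x]t` (with R-coloring `π`) decomposes into the pair of normal planar
terms `[x]t₁` and `[y]t₂`: `t` is obtained (up to α-equivalence) from `t₁` by
replacing the unique occurrence of its free variable `x` (located at the hole
of the context `C`, not captured by any binder of `C`) with `x(λy.t₂)`;
in particular the argument of `x` in `t` is the closed normal planar term
`λy.t₂`. Moreover the size of `t` is the sum of the sizes of `t₁` and `t₂`. -/
def FunDecomp (x : ℕ) (t : Term) {p : Skel 1} (π : Col Color.R 1 p)
    (y : ℕ) (t₁ t₂ : Term) (C : Ctx) : Prop :=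
  t₁ = C.fill (Term.var x) ∧ x ∉ C.binders ∧
  Aeq [x] t [x] (C.fill (Term.app (Term.var x) (Term.lam y t₂))) ∧
  ∃ (p₁ p₂ : Skel 1) (π₁ : Col Color.R 1 p₁) (π₂ : Col Color.R 1 p₂),
    Planar [x] t₁ p₁ ∧ Planar [y] t₂ p₂ ∧
    Col.size π = Col.size π₁ + Col.size π₂

/-!
Planar terms are determined up to α-equivalence by their skeletons, so the argument takes place
on skeletons. In a planar term `[x]t` the variable `x` is the last one of the context, and if it
is not shadowed, everything applied to it has degree `0`. Hence the skeleton of `t` is obtained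
from that of `t₁` by grafting a closed skeleton onto the leaf of its last variable, and grafting is
injective. A coloring of a grafted skeleton splits into colorings of the two pieces, with sizes
adding up; the closed piece is an abstraction, since neutral terms have positive degree.
-/

def Term.degree : Term → ℤ
  | .var _ => 1
  | .app t u => t.degree + u.degree
  | .lam _ t => t.degree - 1

namespace Aeq

variable {Γ Δ Ξ : List ℕ} {t u v : Term}

theorem symm (h : Aeq Γ t Δ u) : Aeq Δ u Γ t := by
  induction h with
  | var => exact .var _ _
  | app _ _ ih₁ ih₂ => exact .app ih₁ ih₂
  | lam _ ih => exact .lam ih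

theorem length_eq_degree (h : Aeq Γ t Δ u) : (Γ.length : ℤ) = t.degree := by
  induction h with
  | var => rfl
  | app _ _ ih₁ ih₂ => simp [Term.degree, ← ih₁, ← ih₂]
  | lam _ ih => simp only [Term.degree, ← ih]; simp

theorem trans (h₁ : Aeq Γ t Δ u) (h₂ : Aeq Δ u Ξ v) : Aeq Γ t Ξ v := by
  induction h₁ generalizing Ξ v with
  | var =>
    generalize hΔ : [_] = Δ at h₂
    cases h₂
    exact .var _ _
  | @app _ _ Δ₁ Δ₂ _ _ _ _ h₁ _ ih₁ ih₂ =>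
    generalize hΔ : Δ₁ ++ Δ₂ = Δ at h₂
    cases h₂ with
    | @app Δ₁' _ _ _ _ _ _ _ h₁' h₂' =>
      have hlen : Δ₁'.length = Δ₁.length := by
        have := h₁.symm.length_eq_degree
        have := h₁'.length_eq_degree
        omega
      obtain ⟨rfl, rfl⟩ := List.append_inj hΔ.symm hlen
      exact .app (ih₁ h₁') (ih₂ h₂')
  | lam _ ih => cases h₂ with | lam h₂ => exact .lam (ih h₂)

end Aeq

/-- The canonical representative of the planar terms on a skeleton: the context is `Δ` and
every abstraction binds the name `b`. -/
def Skel.toTerm (b : ℕ) : {i : ℕ} → Skel i → List ℕ → Term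
  | _, .leaf, Δ => .var Δ.headI
  | _, @Skel.app j _ p q, Δ => .app (p.toTerm b (Δ.take j)) (q.toTerm b (Δ.drop j))
  | _, .lam p, Δ => .lam b (p.toTerm b (b :: Δ))

theorem Skel.planar_toTerm (b : ℕ) {i : ℕ} (p : Skel i) {Δ : List ℕ} (hΔ : Δ.length = i) :
    Planar Δ (p.toTerm b Δ) p := by
  induction p generalizing Δ with
  | leaf =>
    obtain ⟨w, rfl⟩ := List.length_eq_one_iff.mp hΔ
    exact .var w
  | @app j k p q ihp ihq =>
    have := Planar.app (ihp (Δ := Δ.take j) (by simp; omega))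
      (ihq (Δ := Δ.drop j) (by simp; omega))
    rwa [List.take_append_drop] at this
  | lam p ih => exact .lam (ih (by simp [hΔ]))

namespace Planar

variable {i : ℕ} {Γ Δ : List ℕ} {t u : Term} {p : Skel i}

theorem length_eq (h : Planar Γ t p) : Γ.length = i := by
  induction h with
  | var => rfl
  | app _ _ ih₁ ih₂ => simp [ih₁, ih₂]
  | lam _ ih => simpa using ih

theorem length_eq_degree (h : Planar Γ t p) : (Γ.length : ℤ) = t.degree := by
  induction h with
  | var => rfl
  | app _ _ ih₁ ih₂ => simp [Term.degree, ← ih₁, ← ih₂]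
  | lam _ ih => simp only [Term.degree, ← ih]; simp

theorem exists_of_lam {y : ℕ} (h : Planar Γ (.lam y t) p) :
    ∃ p₀ : Skel (i + 1), p = .lam p₀ ∧ Planar (y :: Γ) t p₀ := by
  cases h with
  | lam h => exact ⟨_, rfl, h⟩

theorem of_aeq (h : Aeq Γ t Δ u) (hp : Planar Γ t p) : Planar Δ u p := by
  induction h generalizing i with
  | var =>
    generalize hΓ : [_] = Γ at hp
    cases hp
    exact .var _
  | @app Γ₁ Γ₂ _ _ _ _ _ _ h₁ _ ih₁ ih₂ =>
    generalize hΓ : Γ₁ ++ Γ₂ = Γ at hp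
    cases hp with
    | @app _ _ Γ₁' _ _ _ _ _ hp₁ hp₂ =>
      have hlen : Γ₁'.length = Γ₁.length := by
        have := h₁.length_eq_degree
        have := hp₁.length_eq_degree
        omega
      obtain ⟨rfl, rfl⟩ := List.append_inj hΓ.symm hlen
      exact .app (ih₁ hp₁) (ih₂ hp₂)
  | lam _ ih => cases hp with | lam hp => exact .lam (ih hp)

theorem aeq_toTerm (b : ℕ) (h : Planar Γ t p) (hΔ : Δ.length = Γ.length) :
    Aeq Γ t Δ (p.toTerm b Δ) := by
  induction h generalizing Δ with
  | var =>
    obtain ⟨w, rfl⟩ := List.length_eq_one_iff.mp hΔ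
    exact .var _ w
  | @app j _ _ _ _ _ _ _ h₁ _ ih₁ ih₂ =>
    have hj := h₁.length_eq
    have := Aeq.app (ih₁ (Δ := Δ.take j) (by simp at hΔ ⊢; omega))
      (ih₂ (Δ := Δ.drop j) (by simp at hΔ ⊢; omega))
    rwa [List.take_append_drop] at this
  | lam _ ih => exact .lam (ih (by simp [hΔ]))

theorem aeq (h₁ : Planar Γ t p) (h₂ : Planar Δ u p) : Aeq Γ t Δ u :=
  (h₁.aeq_toTerm 0 (by rw [h₁.length_eq, h₂.length_eq])).trans (h₂.aeq_toTerm 0 rfl).symm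

end Planar

namespace Skel

/-- Replace the leaf of the last free variable of a skeleton by the application of that leaf to
`q`. The last free variable lies in the right factor of an application exactly when that factor
has positive degree. -/
def graft : {i : ℕ} → Skel i → Skel 0 → Skel i
  | _, .leaf, q => .app .leaf q
  | _, @Skel.app _ 0 p r, q => .app (p.graft q) r
  | _, @Skel.app _ (_ + 1) p r, q => .app p (r.graft q)
  | _, .lam p, q => .lam (p.graft q)

theorem graft_not_heq_leaf (q : Skel 0) {i : ℕ} (p : Skel i) (hi : i = 1) :
    ¬ p.graft q ≍ Skel.leaf := by
  intro h
  match i, p with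
  | _, .leaf => exact Skel.noConfusion hi h
  | _, @Skel.app _ 0 _ _ => exact Skel.noConfusion hi h
  | _, @Skel.app _ (_ + 1) _ _ => exact Skel.noConfusion hi h
  | _, .lam _ => exact Skel.noConfusion hi h

theorem graft_heq_graft {q q' : Skel 0} {i : ℕ} (p : Skel i) {i' : ℕ} (p' : Skel i')
    (hi : i = i') (h : p.graft q ≍ p'.graft q') : p ≍ p' ∧ q = q' := by
  induction p generalizing i' with
  | leaf =>
    cases p' with
    | leaf => exact Skel.noConfusion hi h fun _ _ _ hq => ⟨.rfl, eq_of_heq hq⟩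
    | @app _ k' p' r' =>
      cases k' with
      | zero =>
        exact Skel.noConfusion hi h fun hj _ hp _ => (graft_not_heq_leaf q' p' hj.symm hp.symm).elim
      | succ => exact Skel.noConfusion hi h fun _ hk => by omega
    | lam => exact Skel.noConfusion hi h
  | @app j k p r ihp ihr =>
    cases p' with
    | leaf =>
      cases k with
      | zero => exact Skel.noConfusion hi h fun hj _ hp _ => (graft_not_heq_leaf q p hj hp).elim
      | succ => exact Skel.noConfusion hi h fun _ hk => by omega
    | @app _ k' p' r' =>
      cases k <;> cases k'
      · refine Skel.noConfusion hi h fun hj _ hp hr => ?_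
        obtain ⟨hp', rfl⟩ := ihp p' hj hp
        subst hj; cases hp'; cases hr
        exact ⟨.rfl, rfl⟩
      · exact Skel.noConfusion hi h fun _ hk => by omega
      · exact Skel.noConfusion hi h fun _ hk => by omega
      · refine Skel.noConfusion hi h fun hj hk hp hr => ?_
        obtain ⟨hr', rfl⟩ := ihr r' hk hr
        injection hk with hk
        subst hj hk; cases hp; cases hr'
        exact ⟨.rfl, rfl⟩
    | lam => cases k <;> exact Skel.noConfusion hi h
  | lam p ih =>
    cases p' with
    | leaf => exact Skel.noConfusion hi h
    | @app _ k' _ _ => cases k' <;> exact Skel.noConfusion hi h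
    | lam p' =>
      refine Skel.noConfusion hi h fun hi' hp => ?_
      obtain ⟨hp', rfl⟩ := ih p' (by omega) hp
      subst hi'; cases hp'
      exact ⟨.rfl, rfl⟩

theorem graft_inj {i : ℕ} {p p' : Skel i} {q q' : Skel 0} (h : p.graft q = p'.graft q') :
    p = p' ∧ q = q' :=
  (graft_heq_graft p p' rfl (heq_of_eq h)).imp eq_of_heq id

theorem toTerm_graft (b z : ℕ) (q : Skel 0) {i : ℕ} (p : Skel i) {Δ : List ℕ}
    (hΔ : (Δ ++ [z]).length = i) :
    ∃ C : Ctx, (∀ w ∈ C.binders, w = b) ∧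
      (p.graft q).toTerm b (Δ ++ [z]) = C.fill (.app (.var z) (q.toTerm b [])) ∧
      p.toTerm b (Δ ++ [z]) = C.fill (.var z) := by
  induction p generalizing Δ with
  | leaf =>
    obtain rfl : Δ = [] := by simpa using hΔ
    exact ⟨.hole, by simp [Ctx.binders], rfl, rfl⟩
  | @app j k p r ihp ihr =>
    cases k with
    | zero =>
      have hj : (Δ ++ [z]).take j = Δ ++ [z] := List.take_of_length_le (by omega)
      obtain ⟨C, hC, hgraft, hprune⟩ := ihp (Δ := Δ) (by simpa using hΔ)
      refine ⟨.appL C (r.toTerm b ((Δ ++ [z]).drop j)), hC, ?_, ?_⟩ <;>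
        simp only [graft, toTerm, Ctx.fill, hj, hgraft, hprune]
    | succ k =>
      have hj : (Δ ++ [z]).drop j = Δ.drop j ++ [z] :=
        List.drop_append_of_le_length (by simp at hΔ; omega)
      obtain ⟨C, hC, hgraft, hprune⟩ := ihr (Δ := Δ.drop j) (by simp at hΔ ⊢; omega)
      refine ⟨.appR (p.toTerm b ((Δ ++ [z]).take j)) C, hC, ?_, ?_⟩ <;>
        simp only [graft, toTerm, Ctx.fill, hj, hgraft, hprune]
  | lam p ih =>
    obtain ⟨C, hC, hgraft, hprune⟩ := ih (Δ := b :: Δ) (by simpa using hΔ)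
    refine ⟨.lam b C, ?_, ?_, ?_⟩
    · simpa [Ctx.binders] using hC
    · simp only [graft, toTerm, Ctx.fill, ← hgraft, List.cons_append]
    · simp only [toTerm, Ctx.fill, ← hprune, List.cons_append]

end Skel

namespace Col

theorem degree_pos {i : ℕ} {p : Skel i} (d : Col .B i p) : 0 < i := by
  generalize hc : Color.B = c at d
  induction d with
  | v => exact Nat.one_pos
  | a _ _ ih _ => have := ih hc; omega
  | s => cases hc
  | l => cases hc

theorem exists_of_app_B {j k : ℕ} {p : Skel j} {r : Skel k} (d : Col .B (j + k) (.app p r)) :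
    ∃ (dp : Col .B j p) (dr : Col .R k r), d.size = dp.size + dr.size := by
  suffices ∀ {i} {s : Skel i} (d : Col .B i s), i = j + k → s ≍ Skel.app p r →
      ∃ (dp : Col .B j p) (dr : Col .R k r), d.size = dp.size + dr.size from this d rfl .rfl
  intro i s d hi hs
  cases d with
  | v => exact Skel.noConfusion hi hs
  | a dp dr =>
    refine Skel.noConfusion hi hs fun hj hk hp hr => ?_
    subst hj hk; cases hp; cases hr
    exact ⟨dp, dr, rfl⟩

theorem exists_of_app_R {j k : ℕ} {p : Skel j} {r : Skel k} (d : Col .R (j + k) (.app p r)) :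
    ∃ d' : Col .B (j + k) (.app p r), d.size = d'.size + 1 := by
  suffices ∀ {i} {s : Skel i} (d : Col .R i s), i = j + k → s ≍ Skel.app p r →
      ∃ d' : Col .B (j + k) (.app p r), d.size = d'.size + 1 from this d rfl .rfl
  intro i s d hi hs
  cases d with
  | s d' => subst hi; cases hs; exact ⟨d', rfl⟩
  | l => exact Skel.noConfusion hi hs

theorem exists_of_degree_zero {q : Skel 0} (e : Col .R 0 q) :
    ∃ (q₂ : Skel 1) (e₂ : Col .R 1 q₂), q = .lam q₂ ∧ e.size = e₂.size := by
  cases e with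
  | s e => exact absurd e.degree_pos (lt_irrefl 0)
  | l e₂ => exact ⟨_, e₂, rfl, rfl⟩

theorem exists_of_app_of_neutral {q : Skel 0} {c : Color} {j k : ℕ} {p : Skel j} {r : Skel k}
    {s : Skel (j + k)}
    (hB : ∀ d : Col .B (j + k) (.app p r),
      ∃ (d₁ : Col .B (j + k) s) (e : Col .R 0 q), d.size = d₁.size + e.size)
    (d : Col c (j + k) (.app p r)) :
    ∃ (d₁ : Col c (j + k) s) (e : Col .R 0 q), d.size = d₁.size + e.size := by
  cases c with
  | B => exact hB d
  | R =>
    obtain ⟨d', hd⟩ := exists_of_app_R d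
    obtain ⟨d₁, e, hd'⟩ := hB d'
    exact ⟨.s d₁, e, by rw [hd, hd', size]; omega⟩

theorem exists_of_graft {q : Skel 0} {c : Color} {i : ℕ} (p : Skel i)
    (d : Col c i (p.graft q)) :
    ∃ (d₁ : Col c i p) (e : Col .R 0 q), d.size = d₁.size + e.size := by
  induction p generalizing c with
  | leaf => exact exists_of_app_of_neutral (j := 1) (k := 0) exists_of_app_B d
  | @app j k p r ihp ihr =>
    revert d
    cases k with
    | zero =>
      refine exists_of_app_of_neutral fun d => ?_
      obtain ⟨dp, dr, hd⟩ := exists_of_app_B d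
      obtain ⟨dp₁, e, hdp⟩ := ihp dp
      exact ⟨.a dp₁ dr, e, by rw [hd, hdp, size]; omega⟩
    | succ k =>
      refine exists_of_app_of_neutral fun d => ?_
      obtain ⟨dp, dr, hd⟩ := exists_of_app_B d
      obtain ⟨dr₁, e, hdr⟩ := ihr dr
      exact ⟨.a dp dr₁, e, by rw [hd, hdr, size]; omega⟩
  | lam p ih =>
    cases d with
    | s d => cases d
    | l d =>
      obtain ⟨d₁, e, hd⟩ := ih d
      exact ⟨.l d₁, e, hd⟩

end Col

theorem List.eq_nil_or_exists_of_append_eq_concat {α : Type*} {l₁ l₂ l : List α} {x : α}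
    (h : l₁ ++ l₂ = l ++ [x]) : (l₂ = [] ∧ l₁ = l ++ [x]) ∨ ∃ l', l₂ = l' ++ [x] ∧ l = l₁ ++ l' := by
  rcases List.eq_nil_or_concat l₂ with rfl | ⟨l', y, rfl⟩
  · exact .inl ⟨rfl, by simpa using h⟩
  · rw [List.concat_eq_append, ← List.append_assoc] at h
    obtain ⟨h₁, h₂⟩ := List.append_inj' h rfl
    exact .inr ⟨l', by simpa using h₂, h₁.symm⟩

theorem Subterm.exists_ctx {s t : Term} (h : Subterm s t) :
    ∃ C : Ctx, t = C.fill s ∧ C.binders ⊆ tBinders t := by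
  induction h with
  | refl => exact ⟨.hole, rfl, by simp [Ctx.binders]⟩
  | @appL _ u _ ih =>
    obtain ⟨C, rfl, hC⟩ := ih
    exact ⟨.appL C u, rfl, fun w hw => List.mem_append_left _ (hC hw)⟩
  | @appR t _ _ ih =>
    obtain ⟨C, rfl, hC⟩ := ih
    exact ⟨.appR t C, rfl, fun w hw => List.mem_append_right _ (hC hw)⟩
  | @lam _ y _ ih =>
    obtain ⟨C, rfl, hC⟩ := ih
    exact ⟨.lam y C, rfl, List.cons_subset_cons y hC⟩

theorem Planar.mem_of_fill_app_var {x : ℕ} {s : Term} (C : Ctx) {Γ : List ℕ} {i : ℕ}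
    {p : Skel i} (h : Planar Γ (C.fill (.app (.var x) s)) p) (hC : x ∉ C.binders) : x ∈ Γ := by
  induction C generalizing Γ i with
  | hole => cases h with | app h₁ _ => cases h₁; simp
  | appL C u ih =>
    cases h with | app h₁ _ => exact List.mem_append_left _ (ih h₁ hC)
  | appR u C ih =>
    cases h with | app _ h₂ => exact List.mem_append_right _ (ih h₂ hC)
  | lam y C ih =>
    simp only [Ctx.binders, List.mem_cons, not_or] at hC
    cases h with | lam h => exact (List.mem_cons.mp (ih h hC.2)).resolve_left hC.1

theorem Planar.exists_graft_of_fill {x : ℕ} {s : Term} (C : Ctx) {Γ : List ℕ} {i : ℕ}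
    {p : Skel i} (h : Planar (Γ ++ [x]) (C.fill (.app (.var x) s)) p) (hx : x ∉ Γ)
    (hC : x ∉ C.binders) :
    ∃ (p₁ : Skel i) (q : Skel 0), p = p₁.graft q ∧
      Planar (Γ ++ [x]) (C.fill (.var x)) p₁ ∧ Planar [] s q := by
  induction C generalizing Γ i with
  | hole =>
    simp only [Ctx.fill] at h ⊢
    generalize hΓ : Γ ++ [x] = Γ' at h
    cases h with
    | app h₁ h₂ =>
      cases h₁
      rcases List.eq_nil_or_exists_of_append_eq_concat hΓ.symm with ⟨rfl, hΓ⟩ | ⟨l, -, rfl⟩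
      · cases h₂.length_eq
        obtain rfl : Γ = [] := by simpa using hΓ
        exact ⟨.leaf, _, rfl, .var x, h₂⟩
      · simp at hx
  | appL C u ih =>
    simp only [Ctx.fill] at h ⊢
    generalize hΓ : Γ ++ [x] = Γ' at h
    cases h with
    | app h₁ h₂ =>
      rcases List.eq_nil_or_exists_of_append_eq_concat hΓ.symm with ⟨rfl, rfl⟩ | ⟨l, -, rfl⟩
      · cases h₂.length_eq
        obtain ⟨p₁, q, rfl, h₁', hs⟩ := ih h₁ hx hC
        exact ⟨.app p₁ _, q, rfl, by simpa using h₁'.app h₂, hs⟩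
      · exact absurd (List.mem_append_left l (h₁.mem_of_fill_app_var C hC)) hx
  | appR u C ih =>
    simp only [Ctx.fill] at h ⊢
    generalize hΓ : Γ ++ [x] = Γ' at h
    cases h with
    | @app _ k _ _ _ _ _ _ h₁ h₂ =>
      rcases List.eq_nil_or_exists_of_append_eq_concat hΓ.symm with ⟨rfl, -⟩ | ⟨l, rfl, rfl⟩
      · exact absurd (h₂.mem_of_fill_app_var C hC) List.not_mem_nil
      · obtain ⟨k, rfl⟩ : ∃ k', k = k' + 1 := ⟨l.length, by simp [← h₂.length_eq]⟩
        obtain ⟨p₁, q, rfl, h₂', hs⟩ := ih h₂ (fun hl => hx (List.mem_append_right _ hl)) hC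
        exact ⟨.app _ p₁, q, rfl, by simpa using h₁.app h₂', hs⟩
  | lam y C ih =>
    simp only [Ctx.binders, List.mem_cons, not_or] at hC
    simp only [Ctx.fill] at h ⊢
    generalize hΓ : Γ ++ [x] = Γ' at h
    cases h with
    | lam h =>
      subst hΓ
      obtain ⟨p₁, q, rfl, h', hs⟩ := ih (Γ := y :: Γ) h (by simp [hx, hC.1]) hC.2
      exact ⟨.lam p₁, q, rfl, .lam h', hs⟩

/-- Proposition 4.4: a function-open normal planar term `[x]t` decomposes
into a unique (up to α-equivalence) pair of normal planar terms `[x]t₁` and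
`[y]t₂`, with the size of `t` equal to the sum of the sizes of `t₁` and
`t₂`. -/
theorem function_open_decomposition (x : ℕ) (t : Term) {p : Skel 1}
    (ht : Planar [x] t p) (π : Col Color.R 1 p) (hfo : FunctionOpenA x t) :
    ∃ (y : ℕ) (t₁ t₂ : Term) (C : Ctx),
      FunDecomp x t π y t₁ t₂ C ∧
      ∀ (y' : ℕ) (t₁' t₂' : Term) (C' : Ctx),
        FunDecomp x t π y' t₁' t₂' C' →
          Aeq [x] t₁ [x] t₁' ∧ Aeq [y] t₂ [y'] t₂' := by
  obtain ⟨y₀, t', hae, hy₀, u, hsub⟩ := hfo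
  obtain ⟨C₀, rfl, hC₀⟩ := hsub.exists_ctx
  obtain ⟨p₁, q, rfl, -, -⟩ := (Planar.of_aeq hae ht).exists_graft_of_fill C₀ (Γ := [])
    List.not_mem_nil fun h => hy₀ (hC₀ h)
  obtain ⟨π₁, e, hπ⟩ := Col.exists_of_graft p₁ π
  obtain ⟨q₂, π₂, rfl, he⟩ := Col.exists_of_degree_zero e
  -- the canonical representative with every binder named `x + 1` keeps `x` unshadowed
  obtain ⟨C, hC, hgraft, hprune⟩ := Skel.toTerm_graft (x + 1) x (.lam q₂) p₁ (Δ := []) rfl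
  have hxC : x ∉ C.binders := fun h => absurd (hC x h) x.succ_ne_self.symm
  have ht₁ : Planar [x] (C.fill (.var x)) p₁ := hprune ▸ p₁.planar_toTerm (x + 1) rfl
  have ht₂ : Planar [x + 1] (q₂.toTerm (x + 1) [x + 1]) q₂ := q₂.planar_toTerm (x + 1) rfl
  refine ⟨x + 1, C.fill (.var x), q₂.toTerm (x + 1) [x + 1], C,
    ⟨rfl, hxC, ht.aeq (hgraft ▸ (p₁.graft _).planar_toTerm (x + 1) rfl),
      p₁, q₂, π₁, π₂, ht₁, ht₂, by rw [hπ, he]⟩, ?_⟩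
  rintro y' t₁' t₂' C' ⟨rfl, hxC', hae', -⟩
  obtain ⟨p₁', q', hp, ht₁', ht₂'⟩ :=
    (Planar.of_aeq hae' ht).exists_graft_of_fill C' (Γ := []) List.not_mem_nil hxC'
  obtain ⟨q₂', rfl, hbody⟩ := ht₂'.exists_of_lam
  obtain ⟨rfl, hq⟩ := Skel.graft_inj hp
  obtain rfl := Skel.lam.inj hq
  exact ⟨ht₁.aeq ht₁', ht₂.aeq hbody⟩
end
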